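/- arXiv:2103.08556 — 2 statements merged into one kernel-verified Lean document; each statement's English description precedes it below -/
import Mathlib

section
/- If D is a (-1)-class on X^n_s (i.e. ⟨D,D⟩ = -1 and ⟨D, -K⟩ = n-1), then so is Cr_I(D) for any standard Cremona transformation Cr_I. -/
/-- Dolgachev–Mukai pairing on Pic(X^n_s): a class dH - ∑ m_i E_i is encoded as (d, m). -/
def dmPair (n s : ℕ) (D F : ℤ × (Fin s → ℤ)) : ℤ :=
  ((n : ℤ) - 1) * D.1 * F.1 - ∑ i, D.2 i * F.2 i

/-- The anticanonical class -K = (n+1)H - (n-1)∑ E_i. -/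
def antiK (n s : ℕ) : ℤ × (Fin s → ℤ) := (((n : ℤ) + 1), fun _ => (n : ℤ) - 1)

/-- Standard Cremona transformation based on an index set I with |I| = n+1. -/
def cremona (n s : ℕ) (I : Finset (Fin s)) (D : ℤ × (Fin s → ℤ)) : ℤ × (Fin s → ℤ) :=
  let c : ℤ := (∑ i ∈ I, D.2 i) - ((n : ℤ) - 1) * D.1
  (D.1 - c, fun i => if i ∈ I then D.2 i - c else D.2 i)

/-- If D is a (-1)-class, then so is Cr_I(D). -/
theorem cremona_preserves_neg_one_class (n s : ℕ) (I : Finset (Fin s))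
    (hI : I.card = n + 1) (D : ℤ × (Fin s → ℤ))
    (hDD : dmPair n s D D = -1) (hDK : dmPair n s D (antiK n s) = (n : ℤ) - 1) :
    dmPair n s (cremona n s I D) (cremona n s I D) = -1 ∧
      dmPair n s (cremona n s I D) (antiK n s) = (n : ℤ) - 1 := by
  obtain ⟨d, m⟩ := D
  simp only [dmPair, cremona, antiK] at *
  set c : ℤ := (∑ i ∈ I, m i) - ((n : ℤ) - 1) * d with hc
  have hsplit : ∀ f : Fin s → ℤ,
      ∑ i, f i = ∑ i ∈ I, f i + ∑ i ∈ Iᶜ, f i := fun f =>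
    (Finset.sum_add_sum_compl I f).symm
  have hcard : ((I.card : ℤ)) = (n : ℤ) + 1 := by rw [hI]; push_cast; ring
  have key : ∀ g : ℤ → ℤ → ℤ,
      (∑ i, (if i ∈ I then m i - c else m i) * g (if i ∈ I then m i - c else m i) (m i))
        = (∑ i ∈ I, (m i - c) * g (m i - c) (m i)) + ∑ i ∈ Iᶜ, m i * g (m i) (m i) := by
    intro g
    rw [hsplit]
    congr 1
    · exact Finset.sum_congr rfl fun i hi => by rw [if_pos hi]
    · exact Finset.sum_congr rfl fun i hi => by
        rw [if_neg (Finset.mem_compl.mp hi)]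
  have e1 : (∑ i, (if i ∈ I then m i - c else m i) * (if i ∈ I then m i - c else m i))
      = (∑ i, m i * m i) - 2 * c * (∑ i ∈ I, m i) + ((n : ℤ) + 1) * c ^ 2 := by
    have := key (fun x _ => x)
    rw [this, hsplit (fun i => m i * m i)]
    have : ∑ i ∈ I, (m i - c) * (m i - c)
        = (∑ i ∈ I, m i * m i) - 2 * c * (∑ i ∈ I, m i) + (I.card : ℤ) * c ^ 2 := by
      rw [Finset.sum_congr rfl (g := fun i => m i * m i - 2 * c * m i + c ^ 2)
        (fun i _ => by ring)]
      rw [Finset.sum_add_distrib, Finset.sum_sub_distrib, ← Finset.mul_sum,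
        Finset.sum_const, nsmul_eq_mul]
    rw [this, hcard]; ring
  have e2 : (∑ i, (if i ∈ I then m i - c else m i) * ((n : ℤ) - 1))
      = (∑ i, m i * ((n : ℤ) - 1)) - ((n : ℤ) + 1) * c * ((n : ℤ) - 1) := by
    have := key (fun _ _ => (n : ℤ) - 1)
    rw [this, hsplit (fun i => m i * ((n : ℤ) - 1))]
    have : ∑ i ∈ I, (m i - c) * ((n : ℤ) - 1)
        = (∑ i ∈ I, m i * ((n : ℤ) - 1)) - (I.card : ℤ) * c * ((n : ℤ) - 1) := by
      rw [Finset.sum_congr rfl (g := fun i => m i * ((n : ℤ) - 1) - c * ((n : ℤ) - 1))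
        (fun i _ => by ring)]
      rw [Finset.sum_sub_distrib, Finset.sum_const, nsmul_eq_mul]; ring
    rw [this, hcard]; ring
  constructor
  · rw [e1]
    have hcc : (∑ i ∈ I, m i) = c + ((n : ℤ) - 1) * d := by rw [hc]; ring
    rw [hcc]
    linear_combination hDD
  · rw [e2]
    linear_combination hDK
end

section
/- The intersection of the strict transforms of D_1 = 2H-2E_1-E_2-2E_3-E_4-E_5-E_6-E_7 and F_1 = 2H-2E_1-2E_2-E_3-E_4-E_5-E_6-E_7 in the Chow ring of X^4_{8,(1)} equals the sum of the plane class (h - e_1 - e_2 - e_3 - ∑_{i<j∈{1,2,3}}(e_{ij}-f_{ij})) and the cubic surface class (3h - 3e_1 - ∑_{i=2}^7 e_i - (e_{C_8̂} - f_{C_8̂}) - ∑_{i=2}^7(e_{1i} - f_{1i})). -/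
/-- In the Chow ring of X^4_{8,(1)} (modelled as a commutative ring with generators
H, E i, EL i j (line blow-ups), EC (blow-up of the quartic C_8̂ through p₁,…,p₇),
and 2-cycle classes h, e i, eL i j, fL i j, eC, fC, subject to the stated relations),
the product of the strict transforms of D₁ = 2H-2E₁-E₂-2E₃-E₄-E₅-E₆-E₇ and
F₁ = 2H-2E₁-2E₂-E₃-E₄-E₅-E₆-E₇ equals the sum of the plane class
h - e₁ - e₂ - e₃ - ∑_{i<j∈{1,2,3}}(e_{ij}-f_{ij}) and the cubic surface class
3h - 3e₁ - ∑_{i=2}^7 e_i - (e_C - f_C) - ∑_{i=2}^7 (e_{1i} - f_{1i}).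
Points 1,…,8 are indexed by 0,…,7. -/
theorem cubic_surface_class_chow (R : Type*) [CommRing R]
    (H : R) (E : Fin 8 → R) (EL : Fin 8 → Fin 8 → R) (EC : R)
    (h : R) (e : Fin 8 → R) (eL fL : Fin 8 → Fin 8 → R) (eC fC : R)
    (hH2 : H * H = h)
    (hE2 : ∀ i, E i * E i = -e i)
    (hHE : ∀ i, H * E i = 0)
    (hEE : ∀ i j, i ≠ j → E i * E j = 0)
    (hHEL : ∀ i j, i ≠ j → H * EL i j = fL i j)
    (hEEL₁ : ∀ i j, i ≠ j → E i * EL i j = fL i j)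
    (hEEL₂ : ∀ i j, i ≠ j → E j * EL i j = fL i j)
    (hEEL₀ : ∀ i j k, i ≠ j → k ≠ i → k ≠ j → E k * EL i j = 0)
    (hEL2 : ∀ i j, i ≠ j → EL i j * EL i j = -eL i j - fL i j)
    (hELEL : ∀ i j k l, i ≠ j → k ≠ l → ({i, j} : Finset (Fin 8)) ≠ {k, l} →
      EL i j * EL k l = 0)
    (hHEC : H * EC = 4 * fC)
    (hEEC : ∀ j : Fin 8, j ≠ 7 → E j * EC = fC)
    (hE8EC : E 7 * EC = 0)
    (hELEC : ∀ i j, i ≠ j → EL i j * EC = 0)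
    (hEC2 : EC * EC = -eC - fC) :
    (2 * H - 2 * E 0 - E 1 - 2 * E 2 - E 3 - E 4 - E 5 - E 6
        - 2 * EL 0 2 - EL 0 1 - EL 0 3 - EL 0 4 - EL 0 5 - EL 0 6
        - EL 1 2 - EL 2 3 - EL 2 4 - EL 2 5 - EL 2 6 - EC) *
    (2 * H - 2 * E 0 - 2 * E 1 - E 2 - E 3 - E 4 - E 5 - E 6
        - 2 * EL 0 1 - EL 0 2 - EL 0 3 - EL 0 4 - EL 0 5 - EL 0 6
        - EL 1 2 - EL 1 3 - EL 1 4 - EL 1 5 - EL 1 6 - EC)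
      = (h - e 0 - e 1 - e 2
            - (eL 0 1 - fL 0 1) - (eL 0 2 - fL 0 2) - (eL 1 2 - fL 1 2))
        + (3 * h - 3 * e 0 - (e 1 + e 2 + e 3 + e 4 + e 5 + e 6)
            - (eC - fC)
            - ((eL 0 1 - fL 0 1) + (eL 0 2 - fL 0 2) + (eL 0 3 - fL 0 3)
                + (eL 0 4 - fL 0 4) + (eL 0 5 - fL 0 5) + (eL 0 6 - fL 0 6))) := by
  linear_combination (4) * (hH2) + (-8) * (hHE 0) + (-6) * (hHE 1) + (-6) * (hHE 2) + (-4) * (hHE 3) + (-4) * (hHE 4) + (-4) * (hHE 5) + (-4) * (hHE 6) + (-6) * (hHEL 0 1 (by decide)) + (-6) * (hHEL 0 2 (by decide)) + (-4) * (hHEL 0 3 (by decide)) + (-4) * (hHEL 0 4 (by decide)) + (-4) * (hHEL 0 5 (by decide)) + (-4) * (hHEL 0 6 (by decide)) + (-4) * (hHEL 1 2 (by decide)) + (-2) * (hHEL 1 3 (by decide)) + (-2) * (hHEL 1 4 (by decide)) + (-2) * (hHEL 1 5 (by decide)) + (-2) * (hHEL 1 6 (by decide)) + (-4) * (hHEC)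 + (4) * (hE2 0) + (6) * (hEE 0 1 (by decide)) + (6) * (hEE 0 2 (by decide)) + (4) * (hEE 0 3 (by decide)) + (4) * (hEE 0 4 (by decide)) + (4) * (hEE 0 5 (by decide)) + (4) * (hEE 0 6 (by decide)) + (6) * (hEEL₁ 0 1 (by decide)) + (6) * (hEEL₁ 0 2 (by decide)) + (4) * (hEEL₁ 0 3 (by decide)) + (4) * (hEEL₁ 0 4 (by decide)) + (4) * (hEEL₁ 0 5 (by decide)) + (4) * (hEEL₁ 0 6 (by decide)) + (4) * (hEEL₀ 1 2 0 (by decide) (by decide) (by decide)) + (2) * (hEEL₀ 1 3 0 (by decide) (by decide) (by decide)) + (2) * (hEEL₀ 1 4 0 (by decide) (by decide) (by decide)) + (2) * (hEEL₀ 1 5 0 (by decide) (by decide) (by decide)) + (2) * (hEEL₀ 1 6 0 (by decide) (by decide) (by decide)) + (4) * (hEEC 0 (by decide)) + (2) * (hE2 1) + (5) * (hEE 1 2 (by decide)) + (3) * (hEE 1 3 (by decide)) + (3) * (hEE 1 4 (by decide)) + (3) * (hEE 1 5 (by decide)) + (3) * (hEE 1 6 (by decide)) + (4) * (hEEL₂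 0 1 (by decide)) + (5) * (hEEL₀ 0 2 1 (by decide) (by decide) (by decide)) + (3) * (hEEL₀ 0 3 1 (by decide) (by decide) (by decide)) + (3) * (hEEL₀ 0 4 1 (by decide) (by decide) (by decide)) + (3) * (hEEL₀ 0 5 1 (by decide) (by decide) (by decide)) + (3) * (hEEL₀ 0 6 1 (by decide) (by decide) (by decide)) + (3) * (hEEL₁ 1 2 (by decide)) + (1) * (hEEL₁ 1 3 (by decide)) + (1) * (hEEL₁ 1 4 (by decide)) + (1) * (hEEL₁ 1 5 (by decide)) + (1) * (hEEL₁ 1 6 (by decide)) + (3) * (hEEC 1 (by decide)) + (2) * (hE2 2) + (3) * (hEE 2 3 (by decide)) + (3) * (hEE 2 4 (by decide)) + (3) * (hEE 2 5 (by decide)) + (3) * (hEE 2 6 (by decide)) + (5) * (hEEL₀ 0 1 2 (by decide) (by decide) (by decide)) + (4) * (hEEL₂ 0 2 (by decide)) + (3) * (hEEL₀ 0 3 2 (by decide) (by decide) (by decide)) + (3) * (hEEL₀ 0 4 2 (by decide) (by decide) (by decide)) + (3) * (hEEL₀ 0 5 2 (by decide) (by decide) (by decide)) + (3) * (hEEL₀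 0 6 2 (by decide) (by decide) (by decide)) + (3) * (hEEL₂ 1 2 (by decide)) + (2) * (hEEL₀ 1 3 2 (by decide) (by decide) (by decide)) + (2) * (hEEL₀ 1 4 2 (by decide) (by decide) (by decide)) + (2) * (hEEL₀ 1 5 2 (by decide) (by decide) (by decide)) + (2) * (hEEL₀ 1 6 2 (by decide) (by decide) (by decide)) + (3) * (hEEC 2 (by decide)) + (1) * (hE2 3) + (2) * (hEE 3 4 (by decide)) + (2) * (hEE 3 5 (by decide)) + (2) * (hEE 3 6 (by decide)) + (3) * (hEEL₀ 0 1 3 (by decide) (by decide) (by decide)) + (3) * (hEEL₀ 0 2 3 (by decide) (by decide) (by decide)) + (2) * (hEEL₂ 0 3 (by decide)) + (2) * (hEEL₀ 0 4 3 (by decide) (by decide) (by decide)) + (2) * (hEEL₀ 0 5 3 (by decide) (by decide) (by decide)) + (2) * (hEEL₀ 0 6 3 (by decide) (by decide) (by decide)) + (2) * (hEEL₀ 1 2 3 (by decide) (by decide) (by decide)) + (1) * (hEEL₂ 1 3 (by decide)) + (1) * (hEEL₀ 1 4 3 (by decide) (by decide) (by decide)) + (1) * (hEEL₀ 1 5 3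 (by decide) (by decide) (by decide)) + (1) * (hEEL₀ 1 6 3 (by decide) (by decide) (by decide)) + (2) * (hEEC 3 (by decide)) + (1) * (hE2 4) + (2) * (hEE 4 5 (by decide)) + (2) * (hEE 4 6 (by decide)) + (3) * (hEEL₀ 0 1 4 (by decide) (by decide) (by decide)) + (3) * (hEEL₀ 0 2 4 (by decide) (by decide) (by decide)) + (2) * (hEEL₀ 0 3 4 (by decide) (by decide) (by decide)) + (2) * (hEEL₂ 0 4 (by decide)) + (2) * (hEEL₀ 0 5 4 (by decide) (by decide) (by decide)) + (2) * (hEEL₀ 0 6 4 (by decide) (by decide) (by decide)) + (2) * (hEEL₀ 1 2 4 (by decide) (by decide) (by decide)) + (1) * (hEEL₀ 1 3 4 (by decide) (by decide) (by decide)) + (1) * (hEEL₂ 1 4 (by decide)) + (1) * (hEEL₀ 1 5 4 (by decide) (by decide) (by decide)) + (1) * (hEEL₀ 1 6 4 (by decide) (by decide) (by decide)) + (2) * (hEEC 4 (by decide)) + (1) * (hE2 5) + (2) * (hEE 5 6 (by decide)) + (3) * (hEEL₀ 0 1 5 (by decide) (by decide) (by decide)) + (3) * (hEEL₀ 0 2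 5 (by decide) (by decide) (by decide)) + (2) * (hEEL₀ 0 3 5 (by decide) (by decide) (by decide)) + (2) * (hEEL₀ 0 4 5 (by decide) (by decide) (by decide)) + (2) * (hEEL₂ 0 5 (by decide)) + (2) * (hEEL₀ 0 6 5 (by decide) (by decide) (by decide)) + (2) * (hEEL₀ 1 2 5 (by decide) (by decide) (by decide)) + (1) * (hEEL₀ 1 3 5 (by decide) (by decide) (by decide)) + (1) * (hEEL₀ 1 4 5 (by decide) (by decide) (by decide)) + (1) * (hEEL₂ 1 5 (by decide)) + (1) * (hEEL₀ 1 6 5 (by decide) (by decide) (by decide)) + (2) * (hEEC 5 (by decide)) + (1) * (hE2 6) + (3) * (hEEL₀ 0 1 6 (by decide) (by decide) (by decide)) + (3) * (hEEL₀ 0 2 6 (by decide) (by decide) (by decide)) + (2) * (hEEL₀ 0 3 6 (by decide) (by decide) (by decide)) + (2) * (hEEL₀ 0 4 6 (by decide) (by decide) (by decide)) + (2) * (hEEL₀ 0 5 6 (by decide) (by decide) (by decide)) + (2) * (hEEL₂ 0 6 (by decide)) + (2) * (hEEL₀ 1 2 6 (by decide) (by decide) (by decide)) + (1) * (hEEL₀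 1 3 6 (by decide) (by decide) (by decide)) + (1) * (hEEL₀ 1 4 6 (by decide) (by decide) (by decide)) + (1) * (hEEL₀ 1 5 6 (by decide) (by decide) (by decide)) + (1) * (hEEL₂ 1 6 (by decide)) + (2) * (hEEC 6 (by decide)) + (5) * (hELEL 0 1 0 2 (by decide) (by decide) (by decide)) + (2) * (hEL2 0 2 (by decide)) + (3) * (hELEL 0 2 0 3 (by decide) (by decide) (by decide)) + (3) * (hELEL 0 2 0 4 (by decide) (by decide) (by decide)) + (3) * (hELEL 0 2 0 5 (by decide) (by decide) (by decide)) + (3) * (hELEL 0 2 0 6 (by decide) (by decide) (by decide)) + (3) * (hELEL 0 2 1 2 (by decide) (by decide) (by decide)) + (2) * (hELEL 0 2 1 3 (by decide) (by decide) (by decide)) + (2) * (hELEL 0 2 1 4 (by decide) (by decide) (by decide)) + (2) * (hELEL 0 2 1 5 (by decide) (by decide) (by decide)) + (2) * (hELEL 0 2 1 6 (by decide) (by decide) (by decide)) + (3) * (hELEC 0 2 (by decide)) + (2) * (hEL2 0 1 (by decide)) + (3) * (hELEL 0 1 0 3 (by decide) (by decide) (by decide)) + (3) * (hELEL 0 1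 0 4 (by decide) (by decide) (by decide)) + (3) * (hELEL 0 1 0 5 (by decide) (by decide) (by decide)) + (3) * (hELEL 0 1 0 6 (by decide) (by decide) (by decide)) + (3) * (hELEL 0 1 1 2 (by decide) (by decide) (by decide)) + (1) * (hELEL 0 1 1 3 (by decide) (by decide) (by decide)) + (1) * (hELEL 0 1 1 4 (by decide) (by decide) (by decide)) + (1) * (hELEL 0 1 1 5 (by decide) (by decide) (by decide)) + (1) * (hELEL 0 1 1 6 (by decide) (by decide) (by decide)) + (3) * (hELEC 0 1 (by decide)) + (1) * (hEL2 0 3 (by decide)) + (2) * (hELEL 0 3 0 4 (by decide) (by decide) (by decide)) + (2) * (hELEL 0 3 0 5 (by decide) (by decide) (by decide)) + (2) * (hELEL 0 3 0 6 (by decide) (by decide) (by decide)) + (2) * (hELEL 0 3 1 2 (by decide) (by decide) (by decide)) + (1) * (hELEL 0 3 1 3 (by decide) (by decide) (by decide)) + (1) * (hELEL 0 3 1 4 (by decide) (by decide) (by decide)) + (1) * (hELEL 0 3 1 5 (by decide) (by decide) (by decide)) + (1) * (hELEL 0 3 1 6 (by decide) (by decide) (by decide)) + (2) * (hELEC 0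 3 (by decide)) + (1) * (hEL2 0 4 (by decide)) + (2) * (hELEL 0 4 0 5 (by decide) (by decide) (by decide)) + (2) * (hELEL 0 4 0 6 (by decide) (by decide) (by decide)) + (2) * (hELEL 0 4 1 2 (by decide) (by decide) (by decide)) + (1) * (hELEL 0 4 1 3 (by decide) (by decide) (by decide)) + (1) * (hELEL 0 4 1 4 (by decide) (by decide) (by decide)) + (1) * (hELEL 0 4 1 5 (by decide) (by decide) (by decide)) + (1) * (hELEL 0 4 1 6 (by decide) (by decide) (by decide)) + (2) * (hELEC 0 4 (by decide)) + (1) * (hEL2 0 5 (by decide)) + (2) * (hELEL 0 5 0 6 (by decide) (by decide) (by decide)) + (2) * (hELEL 0 5 1 2 (by decide) (by decide) (by decide)) + (1) * (hELEL 0 5 1 3 (by decide) (by decide) (by decide)) + (1) * (hELEL 0 5 1 4 (by decide) (by decide) (by decide)) + (1) * (hELEL 0 5 1 5 (by decide) (by decide) (by decide)) + (1) * (hELEL 0 5 1 6 (by decide) (by decide) (by decide)) + (2) * (hELEC 0 5 (by decide)) + (1) * (hEL2 0 6 (by decide)) + (2) * (hELEL 0 6 1 2 (by decide) (by decide) (by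 decide)) + (1) * (hELEL 0 6 1 3 (by decide) (by decide) (by decide)) + (1) * (hELEL 0 6 1 4 (by decide) (by decide) (by decide)) + (1) * (hELEL 0 6 1 5 (by decide) (by decide) (by decide)) + (1) * (hELEL 0 6 1 6 (by decide) (by decide) (by decide)) + (2) * (hELEC 0 6 (by decide)) + (1) * (hEL2 1 2 (by decide)) + (1) * (hELEL 1 2 1 3 (by decide) (by decide) (by decide)) + (1) * (hELEL 1 2 1 4 (by decide) (by decide) (by decide)) + (1) * (hELEL 1 2 1 5 (by decide) (by decide) (by decide)) + (1) * (hELEL 1 2 1 6 (by decide) (by decide) (by decide)) + (2) * (hELEC 1 2 (by decide)) + (-2) * (hHEL 2 3 (by decide)) + (2) * (hEEL₀ 2 3 0 (by decide) (by decide) (by decide)) + (2) * (hEEL₀ 2 3 1 (by decide) (by decide) (by decide)) + (1) * (hEEL₁ 2 3 (by decide)) + (1) * (hEEL₂ 2 3 (by decide)) + (1) * (hEEL₀ 2 3 4 (by decide) (by decide) (by decide)) + (1) * (hEEL₀ 2 3 5 (by decide) (by decide) (by decide)) + (1) * (hEEL₀ 2 3 6 (by decide) (by decide) (by decide)) + (2)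 * (hELEL 0 1 2 3 (by decide) (by decide) (by decide)) + (1) * (hELEL 0 2 2 3 (by decide) (by decide) (by decide)) + (1) * (hELEL 0 3 2 3 (by decide) (by decide) (by decide)) + (1) * (hELEL 0 4 2 3 (by decide) (by decide) (by decide)) + (1) * (hELEL 0 5 2 3 (by decide) (by decide) (by decide)) + (1) * (hELEL 0 6 2 3 (by decide) (by decide) (by decide)) + (1) * (hELEL 1 2 2 3 (by decide) (by decide) (by decide)) + (1) * (hELEL 1 3 2 3 (by decide) (by decide) (by decide)) + (1) * (hELEL 1 4 2 3 (by decide) (by decide) (by decide)) + (1) * (hELEL 1 5 2 3 (by decide) (by decide) (by decide)) + (1) * (hELEL 1 6 2 3 (by decide) (by decide) (by decide)) + (1) * (hELEC 2 3 (by decide)) + (-2) * (hHEL 2 4 (by decide)) + (2) * (hEEL₀ 2 4 0 (by decide) (by decide) (by decide)) + (2) * (hEEL₀ 2 4 1 (by decide) (by decide) (by decide)) + (1) * (hEEL₁ 2 4 (by decide)) + (1) * (hEEL₀ 2 4 3 (by decide) (by decide) (by decide)) + (1) * (hEEL₂ 2 4 (by decide)) + (1) * (hEEL₀ 2 4 5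 (by decide) (by decide) (by decide)) + (1) * (hEEL₀ 2 4 6 (by decide) (by decide) (by decide)) + (2) * (hELEL 0 1 2 4 (by decide) (by decide) (by decide)) + (1) * (hELEL 0 2 2 4 (by decide) (by decide) (by decide)) + (1) * (hELEL 0 3 2 4 (by decide) (by decide) (by decide)) + (1) * (hELEL 0 4 2 4 (by decide) (by decide) (by decide)) + (1) * (hELEL 0 5 2 4 (by decide) (by decide) (by decide)) + (1) * (hELEL 0 6 2 4 (by decide) (by decide) (by decide)) + (1) * (hELEL 1 2 2 4 (by decide) (by decide) (by decide)) + (1) * (hELEL 1 3 2 4 (by decide) (by decide) (by decide)) + (1) * (hELEL 1 4 2 4 (by decide) (by decide) (by decide)) + (1) * (hELEL 1 5 2 4 (by decide) (by decide) (by decide)) + (1) * (hELEL 1 6 2 4 (by decide) (by decide) (by decide)) + (1) * (hELEC 2 4 (by decide)) + (-2) * (hHEL 2 5 (by decide)) + (2) * (hEEL₀ 2 5 0 (by decide) (by decide) (by decide)) + (2) * (hEEL₀ 2 5 1 (by decide) (by decide) (by decide)) + (1) * (hEEL₁ 2 5 (by decide)) + (1) * (hEEL₀ 2 5 3 (by decide)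 (by decide) (by decide)) + (1) * (hEEL₀ 2 5 4 (by decide) (by decide) (by decide)) + (1) * (hEEL₂ 2 5 (by decide)) + (1) * (hEEL₀ 2 5 6 (by decide) (by decide) (by decide)) + (2) * (hELEL 0 1 2 5 (by decide) (by decide) (by decide)) + (1) * (hELEL 0 2 2 5 (by decide) (by decide) (by decide)) + (1) * (hELEL 0 3 2 5 (by decide) (by decide) (by decide)) + (1) * (hELEL 0 4 2 5 (by decide) (by decide) (by decide)) + (1) * (hELEL 0 5 2 5 (by decide) (by decide) (by decide)) + (1) * (hELEL 0 6 2 5 (by decide) (by decide) (by decide)) + (1) * (hELEL 1 2 2 5 (by decide) (by decide) (by decide)) + (1) * (hELEL 1 3 2 5 (by decide) (by decide) (by decide)) + (1) * (hELEL 1 4 2 5 (by decide) (by decide) (by decide)) + (1) * (hELEL 1 5 2 5 (by decide) (by decide) (by decide)) + (1) * (hELEL 1 6 2 5 (by decide) (by decide) (by decide)) + (1) * (hELEC 2 5 (by decide)) + (-2) * (hHEL 2 6 (by decide)) + (2) * (hEEL₀ 2 6 0 (by decide) (by decide) (by decide)) + (2) * (hEEL₀ 2 6 1 (by decide) (by decide)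 (by decide)) + (1) * (hEEL₁ 2 6 (by decide)) + (1) * (hEEL₀ 2 6 3 (by decide) (by decide) (by decide)) + (1) * (hEEL₀ 2 6 4 (by decide) (by decide) (by decide)) + (1) * (hEEL₀ 2 6 5 (by decide) (by decide) (by decide)) + (1) * (hEEL₂ 2 6 (by decide)) + (2) * (hELEL 0 1 2 6 (by decide) (by decide) (by decide)) + (1) * (hELEL 0 2 2 6 (by decide) (by decide) (by decide)) + (1) * (hELEL 0 3 2 6 (by decide) (by decide) (by decide)) + (1) * (hELEL 0 4 2 6 (by decide) (by decide) (by decide)) + (1) * (hELEL 0 5 2 6 (by decide) (by decide) (by decide)) + (1) * (hELEL 0 6 2 6 (by decide) (by decide) (by decide)) + (1) * (hELEL 1 2 2 6 (by decide) (by decide) (by decide)) + (1) * (hELEL 1 3 2 6 (by decide) (by decide) (by decide)) + (1) * (hELEL 1 4 2 6 (by decide) (by decide) (by decide)) + (1) * (hELEL 1 5 2 6 (by decide) (by decide) (by decide)) + (1) * (hELEL 1 6 2 6 (by decide) (by decide) (by decide)) + (1) * (hELEC 2 6 (by decide)) + (1) * (hELEC 1 3 (by decide)) + (1) * (hELEC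 1 4 (by decide)) + (1) * (hELEC 1 5 (by decide)) + (1) * (hELEC 1 6 (by decide)) + (1) * (hEC2)
end
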